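/- For n ≥ 1 real numbers p₁,…,p_n and angles φ₁,…,φ_n, and nonnegative integers k, l, define F((p₁,φ₁),…,(p_n,φ_n); k, l) = e^{−(1/4)Σ_{j=1}^n p_j² − (1/2)Σ_{1≤i<j≤n} p_i p_j e^{i(φ_i−φ_j)}} · Σ_{r=0}^{min(k,l)} (√(k!·l!)/(r!·(k−r)!·(l−r)!)) · b^{k−r}·a^{l−r}, where a = −(i/√2)·Σ_{j=1}^n p_j e^{iφ_j} and b = −(i/√2)·Σ_{j=1}^n p_j e^{−iφ_j}. Then for all real p₁,…,p_{n+1} with p_j ≠ 0 for all j, all angles φ₁,…,φ_{n+1}, and all nonnegative integers k, l, the series Σ_{m=0}^∞ F((p₁,φ₁),…,(p_n,φ_n); k, m) · F((p_{n+1},φ_{n+1}); m, l) converges absolutely and equals F((p₁,φ₁),…,(p_{n+1},φ_{n+1}); k, l). -/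

import Mathlib

open scoped BigOperators

/-- `a = −(i/√2)·Σ_j p_j·e^{iφ_j}`. -/
noncomputable def aCoef (n : ℕ) (p φ : Fin n → ℝ) : ℂ :=
  -(Complex.I / ((Real.sqrt 2 : ℝ) : ℂ)) *
    ∑ j, ((p j : ℝ) : ℂ) * Complex.exp (Complex.I * ((φ j : ℝ) : ℂ))

/-- `b = −(i/√2)·Σ_j p_j·e^{−iφ_j}`. -/
noncomputable def bCoef (n : ℕ) (p φ : Fin n → ℝ) : ℂ :=
  -(Complex.I / ((Real.sqrt 2 : ℝ) : ℂ)) *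
    ∑ j, ((p j : ℝ) : ℂ) * Complex.exp (-Complex.I * ((φ j : ℝ) : ℂ))

/-- The limit matrix element
`F((p₁,φ₁),…,(p_n,φ_n); k, l) = e^{−(1/4)Σ_j p_j² − (1/2)Σ_{i<j} p_i p_j e^{i(φ_i−φ_j)}}·
Σ_{r=0}^{min(k,l)} (√(k!·l!)/(r!·(k−r)!·(l−r)!))·b^{k−r}·a^{l−r}`. -/
noncomputable def limF (n : ℕ) (p φ : Fin n → ℝ) (k l : ℕ) : ℂ :=
  Complex.exp
      (-(1 / 4 : ℂ) * ∑ j, ((p j : ℝ) : ℂ) ^ 2 -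
        (1 / 2 : ℂ) * ∑ j : Fin n, ∑ i : Fin n,
          if i < j then
            ((p i : ℝ) : ℂ) * ((p j : ℝ) : ℂ) *
              Complex.exp (Complex.I * (((φ i : ℝ) : ℂ) - ((φ j : ℝ) : ℂ)))
          else 0) *
    ∑ r ∈ Finset.range (min k l + 1),
      ((Real.sqrt (k.factorial * l.factorial) : ℝ) : ℂ) /
          ((r.factorial : ℂ) * ((k - r).factorial : ℂ) * ((l - r).factorial : ℂ)) *
        bCoef n p φ ^ (k - r) * aCoef n p φ ^ (l - r)

/-
In the one-mode Fock space with the unnormalised basis `e_n = (a†)ⁿ|0⟩`, the sum in `F(·; k, l)`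
is, up to the factor `√(k!/l!)` that passes to the orthonormal basis, the `(k, l)` entry of the
normally ordered operator `exp (b a†) exp (a a)`. So the series in `m` is the corresponding entry
of `exp (b a†) exp (a a) exp (d a†) exp (c a)`. Commuting the middle pair,
`exp (a a) exp (d a†) = exp (a d) exp (d a†) exp (a a)`, is the only step involving an infinite
sum; afterwards the creation and the annihilation exponentials merge, giving
`exp (a d) exp ((b + d) a†) exp ((a + c) a)`, and `exp (a d)` supplies exactly the cross terms
`i < j = n + 1` of the Gaussian prefactor. With `a, d` replaced by `‖a‖, ‖d‖` the commutation
series dominates the original one, which gives absolute convergence.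
-/

open Finset

lemma hasSum_nat_add_iff_of_eq_zero {G : Type*} [AddCommGroup G] [TopologicalSpace G]
    [IsTopologicalAddGroup G] {f : ℕ → G} {g : G} (k : ℕ) (hf : ∀ i < k, f i = 0) :
    HasSum (fun n => f (n + k)) g ↔ HasSum f g := by
  refine Iff.trans ?_ (hasSum_nat_add_iff' k)
  rw [sum_eq_zero fun i hi => hf i (mem_range.mp hi), sub_zero]

lemma hasSum_choose_mul_pow_mul_pow_div_factorial (a d : ℂ) (q : ℕ) :
    HasSum (fun j => j.choose q * a ^ (j - q) * d ^ j / j.factorial)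
      (d ^ q / q.factorial * Complex.exp (a * d)) := by
  refine (hasSum_nat_add_iff_of_eq_zero q fun j hj => ?_).mp ?_
  · rw [Nat.choose_eq_zero_of_lt hj, Nat.cast_zero, zero_mul, zero_mul, zero_div]
  have hexp := (NormedSpace.expSeries_div_hasSum_exp (a * d)).mul_left (d ^ q / q.factorial)
  rw [← Complex.exp_eq_exp_ℂ] at hexp
  refine hexp.congr_fun fun i => ?_
  rw [← Nat.add_choose_mul_factorial_mul_factorial i q, Nat.add_sub_cancel]
  push_cast
  field_simp [Nat.factorial_ne_zero, (Nat.choose_pos (Nat.le_add_left q i)).ne']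
  ring

namespace Fock

open Nat Polynomial

/-! `expAnnihilation x` and `expCreation x` are the matrices of `exp (x a)` and `exp (x a†)` in
the basis `e_n = (a†)ⁿ|0⟩`, where `a† e_n = e_(n+1)` and `a e_n = n e_(n-1)`, and
`normalOrderedExp x y` is the matrix of `exp (x a†) exp (y a)`. Entry `(k, l)` is the
`e_k`-coordinate of the image of `e_l`. -/

noncomputable def expAnnihilation (x : ℂ) (r s : ℕ) : ℂ := s.choose r * x ^ (s - r)

noncomputable def expCreation (x : ℂ) (k r : ℕ) : ℂ :=
  if r ≤ k then x ^ (k - r) / (k - r)! else 0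

noncomputable def normalOrderedExp (x y : ℂ) (k l : ℕ) : ℂ :=
  ∑ r ∈ range (min k l + 1), expCreation x k r * expAnnihilation y r l

lemma expCreation_of_lt {x : ℂ} {k r : ℕ} (h : k < r) : expCreation x k r = 0 :=
  if_neg (not_le.mpr h)

lemma expAnnihilation_of_lt {x : ℂ} {r s : ℕ} (h : s < r) : expAnnihilation x r s = 0 := by
  rw [expAnnihilation, Nat.choose_eq_zero_of_lt h, Nat.cast_zero, zero_mul]

lemma normalOrderedExp_eq_sum_range (x y : ℂ) {k l n : ℕ} (h : min k l < n) :
    normalOrderedExp x y k l = ∑ r ∈ range n, expCreation x k r * expAnnihilation y r l := by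
  refine sum_subset (range_subset_range.mpr (by omega)) fun r _ hr => ?_
  rcases le_or_gt r k with hk | hk
  · rw [expAnnihilation_of_lt (by simp at hr; omega), mul_zero]
  · rw [expCreation_of_lt hk, zero_mul]

/-- On polynomials `exp (x a)` is the Taylor shift `p(X) ↦ p(X + x)`. -/
lemma expAnnihilation_eq_coeff (x : ℂ) (r s : ℕ) :
    expAnnihilation x r s = ((X + C x) ^ s).coeff r := by
  rw [coeff_X_add_C_pow, expAnnihilation, mul_comm]

lemma sum_expAnnihilation_mul (x y : ℂ) (t l : ℕ) :
    ∑ s ∈ range (l + 1), expAnnihilation x t s * expAnnihilation y s l =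
      expAnnihilation (x + y) t l := by
  rw [expAnnihilation_eq_coeff, C_add, ← add_assoc, add_pow, finsetSum_coeff]
  refine sum_congr rfl fun s _ => ?_
  rw [expAnnihilation_eq_coeff, ← C_pow, ← C_eq_natCast, mul_assoc, ← C_mul, coeff_mul_C,
    expAnnihilation]
  ring

/-- `exp (x a†)` is the adjoint of `exp (x a)` for the inner product `⟨e_m, e_n⟩ = n! δ_mn`. -/
lemma expCreation_eq_expAnnihilation (x : ℂ) (k r : ℕ) :
    expCreation x k r = r ! * expAnnihilation x r k / k ! := by
  unfold expCreation expAnnihilation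
  split_ifs with h
  · rw [Nat.cast_choose ℂ h]
    field_simp [Nat.factorial_ne_zero]
  · simp [Nat.choose_eq_zero_of_lt (not_le.mp h)]

lemma sum_expCreation_mul (x y : ℂ) (k t : ℕ) :
    ∑ r ∈ range (k + 1), expCreation x k r * expCreation y r t = expCreation (x + y) k t := by
  simp only [expCreation_eq_expAnnihilation, add_comm x, ← sum_expAnnihilation_mul y x t k,
    mul_sum, sum_div]
  refine sum_congr rfl fun r _ => ?_
  field_simp [Nat.factorial_ne_zero]

lemma hasSum_expAnnihilation_mul_expCreation (a d : ℂ) (r s : ℕ) :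
    HasSum (fun m => expAnnihilation a r m * expCreation d m s)
      (Complex.exp (a * d) * normalOrderedExp d a r s) := by
  refine (hasSum_nat_add_iff_of_eq_zero s fun m hm => ?_).mp ?_
  · rw [expCreation_of_lt hm, mul_zero]
  have vandermonde : ∀ j, expAnnihilation a r (j + s) * expCreation d (j + s) s =
      ∑ t ∈ range (r + 1), s.choose t * a ^ (s - t) *
        ((j.choose (r - t)) * a ^ (j - (r - t)) * d ^ j / j !) := by
    intro j
    rw [expAnnihilation, expCreation, if_pos (by omega), Nat.add_sub_cancel, add_comm j s,
      Nat.add_choose_eq, Nat.sum_antidiagonal_eq_sum_range_succ_mk, Nat.cast_sum, sum_mul, sum_mul]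
    refine sum_congr rfl fun t ht => ?_
    by_cases hst : t ≤ s ∧ r - t ≤ j
    · have := mem_range.mp ht
      rw [show s + j - r = (s - t) + (j - (r - t)) by omega, pow_add]
      push_cast
      ring
    · rcases not_and_or.mp hst with h | h <;> simp [Nat.choose_eq_zero_of_lt (not_le.mp h)]
  have hsum := hasSum_sum (s := range (r + 1)) fun t _ =>
    (hasSum_choose_mul_pow_mul_pow_div_factorial a d (r - t)).mul_left
      ((s.choose t : ℂ) * a ^ (s - t))
  rw [normalOrderedExp_eq_sum_range d a (n := r + 1) (by omega), mul_sum,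
    sum_congr rfl fun t ht => ?_]
  · exact hsum.congr_fun vandermonde
  rw [expCreation, if_pos (by simp at ht; omega), expAnnihilation]
  ring

lemma sum_expCreation_mul_normalOrderedExp_mul_expAnnihilation (x x' y y' : ℂ) (k l : ℕ) :
    ∑ r ∈ range (k + 1), ∑ s ∈ range (l + 1),
        expCreation x k r * normalOrderedExp x' y r s * expAnnihilation y' s l =
      normalOrderedExp (x + x') (y + y') k l := by
  rw [normalOrderedExp_eq_sum_range _ _ (n := k + 1) (by omega)]
  simp only [← sum_expCreation_mul, ← sum_expAnnihilation_mul, sum_mul_sum]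
  conv_rhs => rw [sum_comm]
  refine sum_congr rfl fun r hr => ?_
  conv_rhs => rw [sum_comm]
  refine sum_congr rfl fun s _ => ?_
  rw [normalOrderedExp_eq_sum_range _ _ (n := k + 1) (by simp at hr; omega), mul_sum, sum_mul]
  exact sum_congr rfl fun t _ => by ring

lemma normalOrderedExp_mul_normalOrderedExp (x y x' y' : ℂ) (k m l : ℕ) :
    normalOrderedExp x y k m * normalOrderedExp x' y' m l =
      ∑ r ∈ range (k + 1), ∑ s ∈ range (l + 1),
        expCreation x k r * (expAnnihilation y r m * expCreation x' m s) *
          expAnnihilation y' s l := by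
  rw [normalOrderedExp_eq_sum_range x y (n := k + 1) (by omega),
    normalOrderedExp_eq_sum_range x' y' (n := l + 1) (by omega), sum_mul_sum]
  exact sum_congr rfl fun r _ => sum_congr rfl fun s _ => by ring

theorem hasSum_normalOrderedExp_mul (x y x' y' : ℂ) (k l : ℕ) :
    HasSum (fun m => normalOrderedExp x y k m * normalOrderedExp x' y' m l)
      (Complex.exp (y * x') * normalOrderedExp (x + x') (y + y') k l) := by
  have hvalue : Complex.exp (y * x') * normalOrderedExp (x + x') (y + y') k l =
      ∑ r ∈ range (k + 1), ∑ s ∈ range (l + 1), expCreation x k r *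
        (Complex.exp (y * x') * normalOrderedExp x' y r s) * expAnnihilation y' s l := by
    rw [← sum_expCreation_mul_normalOrderedExp_mul_expAnnihilation, mul_sum]
    exact sum_congr rfl fun r _ => by rw [mul_sum]; exact sum_congr rfl fun s _ => by ring
  simp only [normalOrderedExp_mul_normalOrderedExp, hvalue]
  exact hasSum_sum fun r _ => hasSum_sum fun s _ =>
    ((hasSum_expAnnihilation_mul_expCreation y x' r s).mul_left _).mul_right _

lemma ofReal_norm_expAnnihilation (x : ℂ) (r s : ℕ) :
    (‖expAnnihilation x r s‖ : ℂ) = expAnnihilation ‖x‖ r s := by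
  simp [expAnnihilation]

lemma ofReal_norm_expCreation (x : ℂ) (k r : ℕ) :
    (‖expCreation x k r‖ : ℂ) = expCreation ‖x‖ k r := by
  unfold expCreation
  split_ifs <;> simp

lemma summable_norm_expAnnihilation_mul_expCreation (a d : ℂ) (r s : ℕ) :
    Summable fun m => ‖expAnnihilation a r m * expCreation d m s‖ := by
  refine Complex.summable_ofReal.mp ?_
  simpa only [norm_mul, Complex.ofReal_mul, ofReal_norm_expAnnihilation, ofReal_norm_expCreation]
    using (hasSum_expAnnihilation_mul_expCreation ‖a‖ ‖d‖ r s).summable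

theorem summable_norm_normalOrderedExp_mul (x y x' y' : ℂ) (k l : ℕ) :
    Summable fun m => ‖normalOrderedExp x y k m * normalOrderedExp x' y' m l‖ := by
  refine Summable.of_nonneg_of_le (fun m => norm_nonneg _) (fun m => ?_)
    (summable_sum (s := range (k + 1)) fun r _ => summable_sum (s := range (l + 1)) fun s _ =>
      ((summable_norm_expAnnihilation_mul_expCreation y x' r s).mul_left
        ‖expCreation x k r‖).mul_right ‖expAnnihilation y' s l‖)
  rw [normalOrderedExp_mul_normalOrderedExp]
  refine (norm_sum_le _ _).trans (sum_le_sum fun r _ => (norm_sum_le _ _).trans_eq ?_)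
  simp only [norm_mul]

end Fock

noncomputable def limExponent (n : ℕ) (p φ : Fin n → ℝ) : ℂ :=
  -(1 / 4 : ℂ) * ∑ j, ((p j : ℝ) : ℂ) ^ 2 -
    (1 / 2 : ℂ) * ∑ j : Fin n, ∑ i : Fin n,
      if i < j then
        ((p i : ℝ) : ℂ) * ((p j : ℝ) : ℂ) *
          Complex.exp (Complex.I * (((φ i : ℝ) : ℂ) - ((φ j : ℝ) : ℂ)))
      else 0

lemma limF_eq_normalOrderedExp (n : ℕ) (p φ : Fin n → ℝ) (k l : ℕ) :
    limF n p φ k l = Complex.exp (limExponent n p φ) *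
      ((√(k.factorial * l.factorial) / l.factorial : ℝ) : ℂ) *
        Fock.normalOrderedExp (bCoef n p φ) (aCoef n p φ) k l := by
  rw [limF, limExponent, Fock.normalOrderedExp, mul_assoc]
  congr 1
  rw [mul_sum]
  refine sum_congr rfl fun r hr => ?_
  have hr : r ≤ k ∧ r ≤ l := by simp at hr; omega
  rw [Fock.expCreation, if_pos hr.1, Fock.expAnnihilation, Nat.cast_choose ℂ hr.2]
  push_cast
  field_simp [Nat.factorial_ne_zero]

lemma Real.sqrt_mul_sqrt_mul {a b c : ℝ} (ha : 0 ≤ a) (hb : 0 ≤ b) :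
    √(a * b) * √(b * c) = b * √(a * c) := by
  rw [← Real.sqrt_mul (by positivity), show a * b * (b * c) = b ^ 2 * (a * c) by ring,
    Real.sqrt_mul (by positivity), Real.sqrt_sq hb]

lemma limF_mul_limF {n n' : ℕ} (p φ : Fin n → ℝ) (p' φ' : Fin n' → ℝ) (k m l : ℕ) :
    limF n p φ k m * limF n' p' φ' m l =
      Complex.exp (limExponent n p φ + limExponent n' p' φ') *
        ((√(k.factorial * l.factorial) / l.factorial : ℝ) : ℂ) *
        (Fock.normalOrderedExp (bCoef n p φ) (aCoef n p φ) k m *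
          Fock.normalOrderedExp (bCoef n' p' φ') (aCoef n' p' φ') m l) := by
  have hsqrt : √(k.factorial * m.factorial) / m.factorial *
      (√(m.factorial * l.factorial) / l.factorial) =
        √(k.factorial * l.factorial) / l.factorial := by
    rw [div_mul_div_comm, Real.sqrt_mul_sqrt_mul (by positivity) (by positivity)]
    field_simp [Nat.factorial_ne_zero]
  rw [limF_eq_normalOrderedExp, limF_eq_normalOrderedExp, Complex.exp_add, ← hsqrt]
  push_cast
  ring

lemma aCoef_succ (n : ℕ) (p φ : Fin (n + 1) → ℝ) :
    aCoef (n + 1) p φ = aCoef n (fun j => p j.castSucc) (fun j => φ j.castSucc) +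
      aCoef 1 (fun _ => p (Fin.last n)) (fun _ => φ (Fin.last n)) := by
  simp only [aCoef, Fin.sum_univ_one]
  rw [Fin.sum_univ_castSucc, mul_add]

lemma bCoef_succ (n : ℕ) (p φ : Fin (n + 1) → ℝ) :
    bCoef (n + 1) p φ = bCoef n (fun j => p j.castSucc) (fun j => φ j.castSucc) +
      bCoef 1 (fun _ => p (Fin.last n)) (fun _ => φ (Fin.last n)) := by
  simp only [bCoef, Fin.sum_univ_one]
  rw [Fin.sum_univ_castSucc, mul_add]

lemma aCoef_mul_bCoef_one (n : ℕ) (p φ : Fin n → ℝ) (q ψ : ℝ) :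
    aCoef n p φ * bCoef 1 (fun _ => q) (fun _ => ψ) =
      -(1 / 2 : ℂ) * ∑ i, (p i : ℂ) * q * Complex.exp (Complex.I * ((φ i : ℂ) - ψ)) := by
  have hcoef : -(Complex.I / ((√2 : ℝ) : ℂ)) * -(Complex.I / ((√2 : ℝ) : ℂ)) = -(1 / 2) := by
    rw [neg_mul_neg, div_mul_div_comm, Complex.I_mul_I, ← Complex.ofReal_mul,
      Real.mul_self_sqrt zero_le_two]
    norm_num
  simp only [aCoef, bCoef, Fin.sum_univ_one, sum_mul, mul_sum]
  refine sum_congr rfl fun i _ => ?_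
  rw [← hcoef, mul_sub, sub_eq_add_neg, Complex.exp_add, neg_mul Complex.I]
  ring

lemma limExponent_succ (n : ℕ) (p φ : Fin (n + 1) → ℝ) :
    limExponent (n + 1) p φ = limExponent n (fun j => p j.castSucc) (fun j => φ j.castSucc) +
      limExponent 1 (fun _ => p (Fin.last n)) (fun _ => φ (Fin.last n)) +
      aCoef n (fun j => p j.castSucc) (fun j => φ j.castSucc) *
        bCoef 1 (fun _ => p (Fin.last n)) (fun _ => φ (Fin.last n)) := by
  rw [aCoef_mul_bCoef_one]
  simp only [limExponent, Fin.sum_univ_castSucc, Fin.castSucc_lt_castSucc_iff,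
    (Fin.castSucc_lt_last _).asymm, Fin.castSucc_lt_last, lt_self_iff_false, if_true, if_false,
    add_zero, Fin.sum_univ_zero]
  ring

theorem limF_factorization_general (n : ℕ) (p φ : Fin (n + 1) → ℝ) (k l : ℕ) :
    Summable (fun m : ℕ =>
      ‖limF n (fun j => p j.castSucc) (fun j => φ j.castSucc) k m *
        limF 1 (fun _ => p (Fin.last n)) (fun _ => φ (Fin.last n)) m l‖) ∧
    ∑' m : ℕ, limF n (fun j => p j.castSucc) (fun j => φ j.castSucc) k m *
        limF 1 (fun _ => p (Fin.last n)) (fun _ => φ (Fin.last n)) m l =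
      limF (n + 1) p φ k l := by
  simp only [limF_mul_limF]
  refine ⟨?_, ?_⟩
  · simpa only [norm_mul] using (Fock.summable_norm_normalOrderedExp_mul _ _ _ _ k l).mul_left _
  · rw [((Fock.hasSum_normalOrderedExp_mul _ _ _ _ k l).mul_left _).tsum_eq,
      limF_eq_normalOrderedExp, aCoef_succ n p φ, bCoef_succ n p φ, limExponent_succ n p φ]
    simp only [Complex.exp_add]
    ring

/-- Factorization of the limit matrix elements: the series
`Σ_{m=0}^∞ F((p₁,φ₁),…,(p_n,φ_n); k, m)·F((p_{n+1},φ_{n+1}); m, l)` converges absolutely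
and equals `F((p₁,φ₁),…,(p_{n+1},φ_{n+1}); k, l)`. -/
theorem limF_factorization (n : ℕ) (hn : 1 ≤ n) (p φ : Fin (n + 1) → ℝ)
    (hp : ∀ j, p j ≠ 0) (k l : ℕ) :
    Summable (fun m : ℕ =>
      ‖limF n (fun j => p j.castSucc) (fun j => φ j.castSucc) k m *
        limF 1 (fun _ => p (Fin.last n)) (fun _ => φ (Fin.last n)) m l‖) ∧
    ∑' m : ℕ, limF n (fun j => p j.castSucc) (fun j => φ j.castSucc) k m *
        limF 1 (fun _ => p (Fin.last n)) (fun _ => φ (Fin.last n)) m l =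
      limF (n + 1) p φ k l :=
  limF_factorization_general n p φ k l
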